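/- arXiv:0801.0051 — 4 statements merged into one kernel-verified Lean document; each statement's English description precedes it below -/
import Mathlib

section
/- Let F_n(x) = 2^{1-n} · #{ j : x_j^(n) ≤ x } denote the distribution function of the n-th generation of the Calkin–Wilf tree. Then for every n ≥ 1 and every x ≥ 0 one has |F(x) − F_n(x)| ≤ 2^{−n}; in particular F_n converges to F uniformly on [0,∞). -/
/-!
Both `F` and `F_n` are self-similar under the two child maps `x ↦ x + 1` and `t ↦ t / (t + 1)` of
the Calkin–Wilf tree: `F (x + 1) = (1 + F x) / 2` and `F (t / (t + 1)) = F t / 2`, and the same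
holds for `F_{n+1}` in terms of `F_n`. Every `x ≥ 0` is the image of some `y ≥ 0` under one of the
two maps, so the error `|F - F_n|` halves from one generation to the next, starting from
`|F - F_1| ≤ 1/2`, which holds because `0 ≤ F ≤ 1` (an alternating series with decreasing terms).

On the continued fraction side, `x ↦ x + 1` adds `1` to `a₀`, while for `0 < v < 1` the expansion
of `1 / v` is that of `v` with `a₀ = 0` dropped; this gives `F (x + 1) = (1 + F x) / 2` and
`F v + F (1 / v) = 1`, which combine to the second self-similarity.
-/

open scoped Classical

/-- Cumulative sums `a₀ + a₁ + ⋯ + a_k` of the regular continued fraction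
expansion of `x` (`none` once the expansion has terminated). -/
noncomputable def cfSum (x : ℝ) : ℕ → Option ℝ
  | 0 => some (⌊x⌋ : ℝ)
  | (k + 1) => (cfSum x k).bind fun s =>
      ((GenContFract.of x).partDens.get? k).map fun b => s + b

/-- The Minkowski question mark function in its version on `[0, ∞)`:
`F([a₀; a₁, a₂, …]) = 1 - 2^{-a₀} + 2^{-(a₀+a₁)} - 2^{-(a₀+a₁+a₂)} + ⋯`. -/
noncomputable def minkQ (x : ℝ) : ℝ :=
  1 + ∑' k : ℕ, (cfSum x k).elim 0 fun s => (-1 : ℝ) ^ (k + 1) * (2 : ℝ) ^ (-s)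

/-- Generations of the Calkin–Wilf tree: `cwGen 0 = [1]` is the first
generation (`cwGen (n-1)` is the `n`-th generation `T^{(n)}`, having `2^{n-1}`
elements), and each vertex `a/b` has children `a/(a+b) = q/(q+1)` and
`(a+b)/b = q+1`. -/
def cwGen : ℕ → List ℚ
  | 0 => [1]
  | (n + 1) => (cwGen n).flatMap fun q => [q / (q + 1), q + 1]

/-- `F_n(x) = 2^{1-n} · #{ j : x_j^{(n)} ≤ x }`, the distribution function of
the `n`-th generation of the Calkin–Wilf tree. -/
noncomputable def cwDist (n : ℕ) (x : ℝ) : ℝ :=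
  ((cwGen (n - 1)).countP fun q => decide ((q : ℝ) ≤ x)) / 2 ^ (n - 1)

namespace GenContFract

variable {K : Type*} [Field K] [LinearOrder K] [IsStrictOrderedRing K] [FloorRing K]

theorem of_s_get?_add_one (v : K) (k : ℕ) :
    (GenContFract.of (v + 1)).s.get? k = (GenContFract.of v).s.get? k := by
  cases k with
  | zero =>
    rcases eq_or_ne (Int.fract v) 0 with h | h
    · obtain ⟨a, rfl⟩ := Int.fract_eq_zero_iff.mp h
      rw [of_s_head_aux, of_s_head_aux, ← Int.cast_one, ← Int.cast_add,
        IntFractPair.stream_succ_of_int, IntFractPair.stream_succ_of_int]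
    · rw [of_s_head_aux, of_s_head_aux, IntFractPair.stream_succ (by rwa [Int.fract_add_one]) 0,
        IntFractPair.stream_succ h 0, Int.fract_add_one]
  | succ k => rw [of_s_succ, of_s_succ, Int.fract_add_one]

theorem of_partDens_get?_add_one (v : K) (k : ℕ) :
    (GenContFract.of (v + 1)).partDens.get? k = (GenContFract.of v).partDens.get? k := by
  simp only [partDens, Stream'.Seq.map_get?, of_s_get?_add_one]

theorem of_partDens_get?_succ (v : K) (k : ℕ) :
    (GenContFract.of v).partDens.get? (k + 1) =
      (GenContFract.of (Int.fract v)⁻¹).partDens.get? k := by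
  simp only [partDens, Stream'.Seq.map_get?, of_s_succ]

end GenContFract

open GenContFract

theorem cfSum_add_one (x : ℝ) : ∀ k, cfSum (x + 1) k = (cfSum x k).map (· + 1)
  | 0 => by simp [cfSum, Int.floor_add_one]
  | k + 1 => by
    rw [cfSum, cfSum, cfSum_add_one x k, of_partDens_get?_add_one]
    cases cfSum x k <;> cases (GenContFract.of x).partDens.get? k <;> simp [add_right_comm]

theorem cfSum_succ_of_fract_ne_zero {x : ℝ} (hx : Int.fract x ≠ 0) :
    ∀ k, cfSum x (k + 1) = (cfSum (Int.fract x)⁻¹ k).map ((⌊x⌋ : ℝ) + ·)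
  | 0 => by
    have hhead : (GenContFract.of x).s.get? 0 = some ⟨1, ⌊(Int.fract x)⁻¹⌋⟩ := of_s_head hx
    simp [cfSum, partDens, hhead]
  | k + 1 => by
    rw [cfSum, cfSum_succ_of_fract_ne_zero hx k, cfSum, of_partDens_get?_succ]
    cases cfSum (Int.fract x)⁻¹ k <;> cases (GenContFract.of (Int.fract x)⁻¹).partDens.get? k <;>
      simp [add_assoc]

theorem cfSum_zero_succ (k : ℕ) : cfSum 0 (k + 1) = none := by
  induction k with
  | zero =>
    have h : (GenContFract.of (0 : ℝ)).s = .nil := by simpa using of_s_of_int ℝ 0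
    simp [cfSum, partDens, h]
  | succ k ih => rw [cfSum, ih, Option.bind_none]

theorem exists_cfSum_eq_some_of_succ {x s' : ℝ} {k : ℕ} (h : cfSum x (k + 1) = some s') :
    ∃ s, cfSum x k = some s ∧ s + 1 ≤ s' := by
  obtain ⟨s, hs, hmap⟩ := Option.bind_eq_some_iff.mp h
  obtain ⟨b, hb, rfl⟩ := Option.map_eq_some_iff.mp hmap
  exact ⟨s, hs, by linarith [of_one_le_get?_partDen hb]⟩

noncomputable def cfWeight (x : ℝ) (k : ℕ) : ℝ :=
  (cfSum x k).elim 0 fun s => (2 : ℝ) ^ (-s)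

theorem minkQ_eq_one_sub_tsum (x : ℝ) : minkQ x = 1 - ∑' k, (-1 : ℝ) ^ k * cfWeight x k := by
  rw [minkQ, sub_eq_add_neg, ← tsum_neg]
  congr 1
  refine tsum_congr fun k => ?_
  cases h : cfSum x k <;> simp [cfWeight, h, pow_succ]

theorem cfWeight_nonneg (x : ℝ) (k : ℕ) : 0 ≤ cfWeight x k := by
  cases h : cfSum x k <;> simp [cfWeight, h, Real.rpow_nonneg]

theorem cfWeight_succ_le (x : ℝ) (k : ℕ) : cfWeight x (k + 1) ≤ cfWeight x k / 2 := by
  cases h : cfSum x (k + 1) with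
  | none =>
    rw [show cfWeight x (k + 1) = 0 by simp [cfWeight, h]]
    exact div_nonneg (cfWeight_nonneg x k) zero_le_two
  | some s' =>
    obtain ⟨s, hs, hle⟩ := exists_cfSum_eq_some_of_succ h
    simp only [cfWeight, h, hs, Option.elim]
    calc (2 : ℝ) ^ (-s') ≤ 2 ^ (-(s + 1)) :=
          Real.rpow_le_rpow_of_exponent_le one_le_two (by linarith)
      _ = 2 ^ (-s) / 2 := by rw [neg_add, Real.rpow_add two_pos, Real.rpow_neg_one, div_eq_mul_inv]

theorem antitone_cfWeight (x : ℝ) : Antitone (cfWeight x) :=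
  antitone_nat_of_succ_le fun k => (cfWeight_succ_le x k).trans (half_le_self (cfWeight_nonneg x k))

theorem cfWeight_zero (x : ℝ) : cfWeight x 0 = 2 ^ (-(⌊x⌋ : ℝ)) := rfl

theorem cfWeight_zero_le_one {x : ℝ} (hx : 0 ≤ x) : cfWeight x 0 ≤ 1 :=
  Real.rpow_le_one_of_one_le_of_nonpos one_le_two (by simpa using Int.floor_nonneg.mpr hx)

theorem cfWeight_le_half_pow {x : ℝ} (hx : 0 ≤ x) (k : ℕ) : cfWeight x k ≤ (1 / 2) ^ k := by
  induction k with
  | zero => simpa using cfWeight_zero_le_one hx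
  | succ k ih => calc
      cfWeight x (k + 1) ≤ cfWeight x k / 2 := cfWeight_succ_le x k
      _ ≤ (1 / 2) ^ (k + 1) := by rw [pow_succ]; linarith

theorem summable_cfWeight_alternating {x : ℝ} (hx : 0 ≤ x) :
    Summable fun k => (-1 : ℝ) ^ k * cfWeight x k :=
  .of_norm_bounded summable_geometric_two fun k => by
    simpa [abs_of_nonneg (cfWeight_nonneg x k)] using cfWeight_le_half_pow hx k

theorem minkQ_mem_Icc {x : ℝ} (hx : 0 ≤ x) : minkQ x ∈ Set.Icc 0 1 := by
  have hsum := (summable_cfWeight_alternating hx).hasSum.tendsto_sum_nat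
  have hlow := (antitone_cfWeight x).alternating_series_le_tendsto hsum 0
  have hupp := (antitone_cfWeight x).tendsto_le_alternating_series hsum 0
  simp only [mul_zero, zero_add, Finset.range_zero, Finset.sum_empty, Finset.range_one,
    Finset.sum_singleton, pow_zero, one_mul] at hlow hupp
  rw [minkQ_eq_one_sub_tsum]
  constructor <;> linarith [cfWeight_zero_le_one hx]

theorem cfWeight_add_one (x : ℝ) (k : ℕ) : cfWeight (x + 1) k = cfWeight x k / 2 := by
  rw [cfWeight, cfWeight, cfSum_add_one]
  cases cfSum x k <;> simp [Real.rpow_add two_pos, Real.rpow_neg_one, div_eq_mul_inv, mul_comm]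

theorem cfWeight_succ_of_fract_ne_zero {x : ℝ} (hx : Int.fract x ≠ 0) (k : ℕ) :
    cfWeight x (k + 1) = 2 ^ (-(⌊x⌋ : ℝ)) * cfWeight (Int.fract x)⁻¹ k := by
  rw [cfWeight, cfWeight, cfSum_succ_of_fract_ne_zero hx]
  cases cfSum (Int.fract x)⁻¹ k <;> simp [Real.rpow_add two_pos, mul_comm]

theorem minkQ_add_one (x : ℝ) : minkQ (x + 1) = (1 + minkQ x) / 2 := by
  simp only [minkQ_eq_one_sub_tsum, cfWeight_add_one, mul_div_assoc', tsum_div_const]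
  ring

theorem minkQ_eq_one_sub_mul_minkQ_fract_inv {x : ℝ} (hx : 0 ≤ x) (hfx : Int.fract x ≠ 0) :
    minkQ x = 1 - 2 ^ (-(⌊x⌋ : ℝ)) * minkQ (Int.fract x)⁻¹ := by
  simp only [minkQ_eq_one_sub_tsum, (summable_cfWeight_alternating hx).tsum_eq_zero_add,
    cfWeight_zero, cfWeight_succ_of_fract_ne_zero hfx, pow_succ, pow_zero]
  have hterm (c w : ℝ) (k : ℕ) : (-1) ^ k * -1 * (c * w) = -(c * ((-1) ^ k * w)) := by ring
  simp only [hterm, tsum_neg, tsum_mul_left]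
  ring

theorem minkQ_zero : minkQ 0 = 0 := by
  rw [minkQ_eq_one_sub_tsum, tsum_eq_single 0 fun k hk => ?_]
  · simp [cfWeight_zero]
  · obtain ⟨k, rfl⟩ := Nat.exists_eq_succ_of_ne_zero hk
    simp [cfWeight, cfSum_zero_succ]

theorem minkQ_add_minkQ_inv {t : ℝ} (ht : 0 < t) : minkQ t + minkQ t⁻¹ = 1 := by
  have of_lt_one {v : ℝ} (hv0 : 0 < v) (hv1 : v < 1) : minkQ v + minkQ v⁻¹ = 1 := by
    have hfl : ⌊v⌋ = 0 := Int.floor_eq_zero_iff.mpr ⟨hv0.le, hv1⟩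
    have hfr : Int.fract v = v := Int.fract_eq_self.mpr ⟨hv0.le, hv1⟩
    rw [minkQ_eq_one_sub_mul_minkQ_fract_inv hv0.le (by rw [hfr]; exact hv0.ne'), hfl, hfr]
    simp
  rcases lt_trichotomy t 1 with h | rfl | h
  · exact of_lt_one ht h
  · have h1 : minkQ 1 = 1 / 2 := by simpa [minkQ_zero] using minkQ_add_one 0
    rw [inv_one, h1]; norm_num
  · simpa [add_comm] using of_lt_one (inv_pos.mpr ht) (inv_lt_one_of_one_lt₀ h)

theorem minkQ_div_add_one {t : ℝ} (ht : 0 ≤ t) : minkQ (t / (t + 1)) = minkQ t / 2 := by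
  rcases ht.eq_or_lt with rfl | ht
  · simp [minkQ_zero]
  have hinv : (t / (t + 1))⁻¹ = t⁻¹ + 1 := by
    field_simp
    ring
  have h := minkQ_add_minkQ_inv (div_pos ht (by linarith : 0 < t + 1))
  rw [hinv, minkQ_add_one] at h
  linarith [minkQ_add_minkQ_inv ht]

def cwChildren (q : ℚ) : List ℚ := [q / (q + 1), q + 1]

theorem cwGen_succ (m : ℕ) : cwGen (m + 1) = (cwGen m).flatMap cwChildren := rfl

theorem cwGen_pos : ∀ m, ∀ q ∈ cwGen m, 0 < q
  | 0 => by simp [cwGen]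
  | m + 1 => by
    simp only [cwGen_succ, List.mem_flatMap, cwChildren, List.mem_cons, List.not_mem_nil,
      or_false]
    rintro q ⟨p, hp, rfl | rfl⟩ <;> have := cwGen_pos m p hp <;> positivity

theorem length_cwGen : ∀ m, (cwGen m).length = 2 ^ m
  | 0 => rfl
  | m + 1 => by simp [cwGen_succ, List.length_flatMap, cwChildren, length_cwGen m, pow_succ]

theorem countP_flatMap_cwChildren_add_one {y : ℝ} (hy : 0 ≤ y) {l : List ℚ}
    (hl : ∀ q ∈ l, 0 < q) :
    (l.flatMap cwChildren).countP (fun q : ℚ => (q : ℝ) ≤ y + 1) =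
      l.length + l.countP (fun q : ℚ => (q : ℝ) ≤ y) := by
  induction l with
  | nil => rfl
  | cons q l ih =>
    have hq : (0 : ℝ) < q := by exact_mod_cast hl q List.mem_cons_self
    have hleft : (q : ℝ) / (q + 1) ≤ y + 1 :=
      ((div_lt_one (by linarith)).mpr (by linarith)).le.trans (by linarith)
    simp [cwChildren, List.countP_cons, hleft, ih fun p hp => hl p (List.mem_cons_of_mem q hp)]
    split_ifs <;> omega

theorem countP_flatMap_cwChildren_div_add_one {t : ℝ} (ht : 0 ≤ t) {l : List ℚ}
    (hl : ∀ q ∈ l, 0 < q) :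
    (l.flatMap cwChildren).countP (fun q : ℚ => (q : ℝ) ≤ t / (t + 1)) =
      l.countP (fun q : ℚ => (q : ℝ) ≤ t) := by
  induction l with
  | nil => rfl
  | cons q l ih =>
    have hq : (0 : ℝ) < q := by exact_mod_cast hl q List.mem_cons_self
    have hright : ¬ (q : ℝ) + 1 ≤ t / (t + 1) :=
      ((div_lt_one (by linarith)).mpr (by linarith)).trans (by linarith) |>.not_ge
    have hleft : (q : ℝ) / (q + 1) ≤ t / (t + 1) ↔ (q : ℝ) ≤ t := by
      rw [div_le_div_iff₀ (by linarith) (by linarith)]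
      constructor <;> intro <;> linarith
    simp [cwChildren, List.countP_cons, hleft, hright,
      ih fun p hp => hl p (List.mem_cons_of_mem q hp)]

theorem cwDist_succ (m : ℕ) (x : ℝ) :
    cwDist (m + 1) x = (cwGen m).countP (fun q : ℚ => (q : ℝ) ≤ x) / 2 ^ m := by
  -- the binder of `cwDist` is real, so it counts in the list coerced to `List ℝ`
  have hcast : (cwGen m).flatMap (fun q : ℚ => [(q : ℝ)]) = (cwGen m).map (↑) :=
    List.flatMap_pure_eq_map _ _
  simp [cwDist, hcast, List.countP_map, Function.comp_def]

theorem cwDist_one (x : ℝ) : cwDist 1 x = if 1 ≤ x then 1 else 0 := by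
  simp [cwDist_succ 0, cwGen, List.countP_cons]

theorem cwDist_succ_succ_add_one {y : ℝ} (hy : 0 ≤ y) (m : ℕ) :
    cwDist (m + 2) (y + 1) = (1 + cwDist (m + 1) y) / 2 := by
  rw [cwDist_succ, cwDist_succ, cwGen_succ,
    countP_flatMap_cwChildren_add_one hy (cwGen_pos m), length_cwGen]
  push_cast
  field_simp
  ring

theorem cwDist_succ_succ_div_add_one {t : ℝ} (ht : 0 ≤ t) (m : ℕ) :
    cwDist (m + 2) (t / (t + 1)) = cwDist (m + 1) t / 2 := by
  rw [cwDist_succ, cwDist_succ, cwGen_succ,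
    countP_flatMap_cwChildren_div_add_one ht (cwGen_pos m), pow_succ, div_div]

theorem exists_eq_add_one_or_eq_div_add_one {x : ℝ} (hx : 0 ≤ x) :
    (∃ y, 0 ≤ y ∧ x = y + 1) ∨ ∃ t, 0 ≤ t ∧ x = t / (t + 1) := by
  rcases le_or_gt 1 x with h1 | h1
  · exact .inl ⟨x - 1, by linarith, by ring⟩
  · refine .inr ⟨x / (1 - x), div_nonneg hx (by linarith), ?_⟩
    have : 1 - x ≠ 0 := by linarith
    field_simp
    ring

theorem abs_minkQ_sub_cwDist_one_le {x : ℝ} (hx : 0 ≤ x) : |minkQ x - cwDist 1 x| ≤ 2⁻¹ := by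
  rw [cwDist_one]
  rcases exists_eq_add_one_or_eq_div_add_one hx with ⟨y, hy, rfl⟩ | ⟨t, ht, rfl⟩
  · have := minkQ_mem_Icc hy
    rw [if_pos (by linarith), minkQ_add_one, abs_le]
    constructor <;> linarith [this.1, this.2]
  · have := minkQ_mem_Icc ht
    rw [if_neg ((div_lt_one (by linarith)).mpr (by linarith)).not_ge, minkQ_div_add_one ht, abs_le]
    constructor <;> linarith [this.1, this.2]

theorem exists_minkQ_sub_cwDist_succ_succ_eq_half (m : ℕ) {x : ℝ} (hx : 0 ≤ x) :
    ∃ y, 0 ≤ y ∧ minkQ x - cwDist (m + 2) x = (minkQ y - cwDist (m + 1) y) / 2 := by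
  rcases exists_eq_add_one_or_eq_div_add_one hx with ⟨y, hy, rfl⟩ | ⟨t, ht, rfl⟩
  · refine ⟨y, hy, ?_⟩
    rw [minkQ_add_one, cwDist_succ_succ_add_one hy]
    ring
  · refine ⟨t, ht, ?_⟩
    rw [minkQ_div_add_one ht, cwDist_succ_succ_div_add_one ht]
    ring

theorem abs_minkQ_sub_cwDist_le {n : ℕ} (hn : 1 ≤ n) {x : ℝ} (hx : 0 ≤ x) :
    |minkQ x - cwDist n x| ≤ 2⁻¹ ^ n := by
  induction n, hn using Nat.le_induction generalizing x with
  | base => simpa using abs_minkQ_sub_cwDist_one_le hx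
  | succ n hn ih =>
    obtain ⟨m, rfl⟩ := Nat.exists_eq_add_of_le' hn
    obtain ⟨y, hy, heq⟩ := exists_minkQ_sub_cwDist_succ_succ_eq_half m hx
    rw [heq, abs_div, abs_two, pow_succ, ← div_eq_mul_inv]
    exact div_le_div_of_nonneg_right (ih hy) zero_le_two

theorem tendstoUniformlyOn_cwDist : TendstoUniformlyOn cwDist minkQ Filter.atTop (Set.Ici 0) := by
  rw [Metric.tendstoUniformlyOn_iff]
  intro ε hε
  have hsmall := (tendsto_pow_atTop_nhds_zero_of_lt_one (by norm_num) (by norm_num : (2⁻¹ : ℝ) < 1))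
  filter_upwards [hsmall.eventually (gt_mem_nhds hε), Filter.eventually_ge_atTop 1]
    with n hε hn x hx
  rw [Real.dist_eq]
  exact (abs_minkQ_sub_cwDist_le hn hx).trans_lt hε

/-- For every `n ≥ 1` and every `x ≥ 0` one has `|F(x) − F_n(x)| ≤ 2^{−n}`;
in particular `F_n → F` uniformly on `[0, ∞)`. -/
theorem minkQ_sub_cwDist_abs_le (n : ℕ) (hn : 1 ≤ n) (x : ℝ) (hx : 0 ≤ x) :
    |minkQ x - cwDist n x| ≤ 2 ^ (-(n : ℤ)) ∧
    TendstoUniformlyOn (fun n x => cwDist n x) minkQ Filter.atTop (Set.Ici 0) := by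
  rw [zpow_neg, zpow_natCast, ← inv_pow]
  exact ⟨abs_minkQ_sub_cwDist_le hn hx, tendstoUniformlyOn_cwDist⟩
end

section
/- Let C = e^{−√(log 2)}. Then there exist positive constants c_1, c_2 such that for all sufficiently large real t, c_1 · C^{2√t} ≤ m(−t) ≤ c_2 · C^{√t}; i.e. C^{2√t} ≪ m(−t) ≪ C^{√t} as t → ∞. -/
open scoped Classical
open MeasureTheory

/-- `μ` is the Lebesgue–Stieltjes measure `dF` of the Minkowski question mark
function: it is supported on `[0, ∞)` and its cumulative distribution function
is `F = minkQ` there. -/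
def IsMinkowskiMeasure (μ : Measure ℝ) : Prop :=
  μ (Set.Iio 0) = 0 ∧ ∀ x : ℝ, 0 ≤ x → μ (Set.Iic x) = ENNReal.ofReal (minkQ x)

/-- The moment `m_L = ∫₀^∞ (x/(x+1))^L dF(x)`. -/
noncomputable def mMom (μ : Measure ℝ) (L : ℕ) : ℝ :=
  ∫ x, (x / (x + 1)) ^ L ∂μ

/-- The moment `M_L = ∫₀^∞ x^L dF(x)`. -/
noncomputable def MMom (μ : Measure ℝ) (L : ℕ) : ℝ :=
  ∫ x, x ^ L ∂μ

/-- The exponential generating function of the moments,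
`m(t) = ∫₀^∞ exp(xt/(x+1)) dF(x)`. -/
noncomputable def mEGF (μ : Measure ℝ) (t : ℝ) : ℝ :=
  ∫ x, Real.exp (x * t / (x + 1)) ∂μ

/-!
Since `F(1/n) = 2^{-n}` and `F ≤ 1`, the measure `dF` gives mass `2^{-n}` to `[0, 1/n]` and has
total mass at most `1`. The integrand `e^{-xt/(x+1)}` is at least `e^{-t/n}` on `[0, 1/n]` and at
most `e^{-t/(n+1)}` beyond `1/n`, so `e^{-t/n} 2^{-n} ≤ m(-t) ≤ 2^{-n} + e^{-t/(n+1)}`. Taking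
`n = ⌈√(t / log 2)⌉` balances the two exponents: `t/n` and `n log 2` are then both
`√(t log 2) + O(1)`.
-/

noncomputable def minkQTerm (x : ℝ) (k : ℕ) : ℝ :=
  (cfSum x k).elim 0 fun s => (-1 : ℝ) ^ (k + 1) * (2 : ℝ) ^ (-s)

lemma minkQ_eq_one_add_tsum (x : ℝ) : minkQ x = 1 + ∑' k, minkQTerm x k := rfl

lemma cfSum_zero (x : ℝ) : cfSum x 0 = some (⌊x⌋ : ℝ) := rfl

lemma cfSum_succ (x : ℝ) (k : ℕ) : cfSum x (k + 1) = (cfSum x k).bind fun s =>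
    ((GenContFract.of x).partDens.get? k).map fun b => s + b := rfl

lemma cfSum_eq_none_of_le {x : ℝ} {N k : ℕ} (h : cfSum x N = none) (hk : N ≤ k) :
    cfSum x k = none := by
  induction k, hk using Nat.le_induction with
  | base => exact h
  | succ k _ ih => rw [cfSum_succ, ih, Option.bind_none]

lemma floor_add_le_of_cfSum_eq_some {x s : ℝ} {k : ℕ} (h : cfSum x k = some s) :
    (⌊x⌋ : ℝ) + k ≤ s := by
  induction k generalizing s with
  | zero => simp_all [cfSum_zero]
  | succ k ih =>
    obtain ⟨s', hs', hmap⟩ := Option.bind_eq_some_iff.mp ((cfSum_succ x k).symm.trans h)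
    obtain ⟨b, hb, rfl⟩ := Option.map_eq_some_iff.mp hmap
    have := GenContFract.of_one_le_get?_partDen hb
    push_cast
    linarith [ih hs']

lemma abs_minkQTerm_le (x : ℝ) (k : ℕ) :
    |minkQTerm x k| ≤ (2 : ℝ) ^ (-(⌊x⌋ : ℝ)) * (1 / 2 : ℝ) ^ k := by
  have hpow : (2 : ℝ) ^ (-(⌊x⌋ : ℝ)) * (1 / 2 : ℝ) ^ k = (2 : ℝ) ^ (-((⌊x⌋ : ℝ) + k)) := by
    rw [neg_add, Real.rpow_add two_pos, Real.rpow_neg two_pos.le (k : ℝ), Real.rpow_natCast,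
      one_div, inv_pow]
  rw [hpow, minkQTerm]
  cases h : cfSum x k with
  | none => simp only [Option.elim, abs_zero]; positivity
  | some s =>
    simp only [Option.elim, abs_mul, abs_pow, abs_neg, abs_one, one_pow, one_mul,
      abs_of_pos (Real.rpow_pos_of_pos two_pos _)]
    exact Real.rpow_le_rpow_of_exponent_le one_le_two
      (by linarith [floor_add_le_of_cfSum_eq_some h])

lemma summable_minkQTerm (x : ℝ) : Summable (minkQTerm x) :=
  .of_norm_bounded (summable_geometric_two.mul_left _) (abs_minkQTerm_le x)

/-- The first term `-2^{-a₀}` dominates the alternating tail. -/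
lemma minkQ_le_one (x : ℝ) : minkQ x ≤ 1 := by
  set c : ℝ := (2 : ℝ) ^ (-(⌊x⌋ : ℝ))
  have hterm0 : minkQTerm x 0 = -c := by simp [minkQTerm, cfSum_zero, c]
  have htail : ∑' k, minkQTerm x (k + 1) ≤ ∑' k : ℕ, c / 2 * (1 / 2 : ℝ) ^ k :=
    Summable.tsum_le_tsum
      (fun k => ((abs_le.mp (abs_minkQTerm_le x (k + 1))).2).trans_eq (by ring))
      ((summable_nat_add_iff 1).2 (summable_minkQTerm x))
      (summable_geometric_two.mul_left _)
  rw [tsum_mul_left, tsum_geometric_two] at htail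
  rw [minkQ_eq_one_add_tsum, (summable_minkQTerm x).tsum_eq_zero_add, hterm0]
  linarith

lemma minkQ_eq_one_add_sum_range {x : ℝ} {N : ℕ} (h : cfSum x N = none) :
    minkQ x = 1 + ∑ k ∈ Finset.range N, minkQTerm x k := by
  rw [minkQ_eq_one_add_tsum, tsum_eq_sum]
  intro k hk
  simp [minkQTerm, cfSum_eq_none_of_le h (by simpa using hk)]

lemma minkQ_intCast (a : ℤ) : minkQ a = 1 - (2 : ℝ) ^ (-(a : ℝ)) := by
  have h1 : cfSum a 1 = none := by
    rw [cfSum_succ, Option.bind_eq_none_iff]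
    intro s _
    rw [Option.map_eq_none_iff, GenContFract.partDen_none_iff_s_none, GenContFract.of_s_of_int,
      Stream'.Seq.get?_nil]
  rw [minkQ_eq_one_add_sum_range h1]
  simp [minkQTerm, cfSum_zero, sub_eq_add_neg]

lemma inv_natCast_mem_Ico {n : ℕ} (hn : 2 ≤ n) : (n : ℝ)⁻¹ ∈ Set.Ico 0 1 :=
  ⟨by positivity, inv_lt_one_of_one_lt₀ (by exact_mod_cast hn)⟩

lemma GenContFract.of_inv_natCast_s_get?_zero {n : ℕ} (hn : 2 ≤ n) :
    (GenContFract.of ((n : ℝ)⁻¹)).s.get? 0 = some ⟨1, n⟩ := by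
  have hfract := Int.fract_eq_self.mpr (inv_natCast_mem_Ico hn)
  have := GenContFract.of_s_head (v := (n : ℝ)⁻¹) (by rw [hfract]; positivity)
  rw [hfract, inv_inv, Int.floor_natCast, Int.cast_natCast] at this
  exact this

lemma GenContFract.of_inv_natCast_s_get?_one {n : ℕ} (hn : 2 ≤ n) :
    (GenContFract.of ((n : ℝ)⁻¹)).s.get? 1 = none := by
  rw [GenContFract.of_s_succ, Int.fract_eq_self.mpr (inv_natCast_mem_Ico hn), inv_inv,
    ← Int.cast_natCast, GenContFract.of_s_of_int, Stream'.Seq.get?_nil]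

/-- `1/n = [0; n]`. -/
lemma minkQ_inv_natCast {n : ℕ} (hn : 1 ≤ n) : minkQ (n : ℝ)⁻¹ = (2 : ℝ) ^ (-(n : ℝ)) := by
  obtain rfl | hn2 := hn.eq_or_lt
  · have := minkQ_intCast 1
    norm_num at this ⊢
    linarith
  have hfloor : ⌊(n : ℝ)⁻¹⌋ = 0 := Int.floor_eq_zero_iff.mpr (inv_natCast_mem_Ico hn2)
  have h1 : cfSum (n : ℝ)⁻¹ 1 = some (n : ℝ) := by
    rw [cfSum_succ, cfSum_zero, hfloor, Option.bind_some,
      GenContFract.partDen_eq_s_b (GenContFract.of_inv_natCast_s_get?_zero hn2), Option.map_some]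
    simp
  have h2 : cfSum (n : ℝ)⁻¹ 2 = none := by
    rw [cfSum_succ, h1, Option.bind_some, GenContFract.partDen_none_iff_s_none.mpr
      (GenContFract.of_inv_natCast_s_get?_one hn2), Option.map_none]
  rw [minkQ_eq_one_add_sum_range h2, Finset.sum_range_succ, Finset.sum_range_one, minkQTerm,
    minkQTerm, cfSum_zero, h1, hfloor]
  norm_num

section LaplaceBounds

variable {μ : Measure ℝ} [IsFiniteMeasure μ] {t : ℝ}

lemma integrable_exp_mul_neg_div (hμ : ∀ᵐ x ∂μ, 0 ≤ x) (ht : 0 ≤ t) :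
    Integrable (fun x => Real.exp (x * -t / (x + 1))) μ := by
  refine (integrable_const (1 : ℝ)).mono'
    (by fun_prop : Measurable fun x : ℝ => Real.exp (x * -t / (x + 1))).aestronglyMeasurable ?_
  filter_upwards [hμ] with x hx
  rw [Real.norm_eq_abs, abs_of_pos (Real.exp_pos _), Real.exp_le_one_iff]
  exact div_nonpos_of_nonpos_of_nonneg (by nlinarith) (by linarith)

/-- On `[0, δ]` the integrand is at least `e^{-δt}`, since `x/(x+1) ≤ x`. -/
lemma exp_neg_mul_mul_measureReal_Iic_le_mEGF_neg (hμ : ∀ᵐ x ∂μ, 0 ≤ x) (ht : 0 ≤ t) (δ : ℝ) :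
    Real.exp (-(δ * t)) * μ.real (Set.Iic δ) ≤ mEGF μ (-t) := by
  rw [mul_comm, ← smul_eq_mul, ← integral_indicator_const _ measurableSet_Iic]
  refine integral_mono_ae ((integrable_const _).indicator measurableSet_Iic)
    (integrable_exp_mul_neg_div hμ ht) ?_
  filter_upwards [hμ] with x hx
  by_cases hxδ : x ∈ Set.Iic δ
  · rw [Set.indicator_of_mem hxδ, Real.exp_le_exp, le_div_iff₀ (by linarith)]
    have hxδ : x ≤ δ := hxδ
    nlinarith [mul_le_mul_of_nonneg_right hxδ ht, mul_nonneg (mul_nonneg (hx.trans hxδ) ht) hx]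
  · rw [Set.indicator_of_notMem hxδ]
    exact (Real.exp_pos _).le

/-- Beyond `δ` the integrand is at most `e^{-tδ/(δ+1)}`, since `x/(x+1)` increases. -/
lemma mEGF_neg_le_measureReal_Iic_add (hμ : ∀ᵐ x ∂μ, 0 ≤ x) (ht : 0 ≤ t) {δ : ℝ} (hδ : 0 ≤ δ) :
    mEGF μ (-t) ≤ μ.real (Set.Iic δ) + Real.exp (-(δ / (δ + 1) * t)) * μ.real Set.univ := by
  rw [mul_comm, ← smul_eq_mul, ← integral_const, ← integral_indicator_one measurableSet_Iic,
    ← integral_add ((integrable_const _).indicator measurableSet_Iic) (integrable_const _)]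
  refine integral_mono_ae (integrable_exp_mul_neg_div hμ ht)
    (((integrable_const _).indicator measurableSet_Iic).add (integrable_const _)) ?_
  filter_upwards [hμ] with x hx
  have hle_one : Real.exp (x * -t / (x + 1)) ≤ 1 := by
    rw [Real.exp_le_one_iff]
    exact div_nonpos_of_nonpos_of_nonneg (by nlinarith) (by linarith)
  by_cases hxδ : x ∈ Set.Iic δ
  · simp only [Set.indicator_of_mem hxδ, Pi.one_apply]
    linarith [Real.exp_pos (-(δ / (δ + 1) * t))]
  · simp only [Set.indicator_of_notMem hxδ, zero_add]
    rw [Real.exp_le_exp, div_mul_eq_mul_div, neg_div', div_le_div_iff₀ (by linarith) (by linarith)]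
    nlinarith [mul_le_mul_of_nonneg_left (not_le.mp hxδ).le ht]

end LaplaceBounds

namespace IsMinkowskiMeasure

variable {μ : Measure ℝ}

lemma ae_nonneg (hμ : IsMinkowskiMeasure μ) : ∀ᵐ x ∂μ, 0 ≤ x := by
  rw [ae_iff]
  simp only [not_le]
  exact hμ.1

lemma measure_univ_le_one (hμ : IsMinkowskiMeasure μ) : μ Set.univ ≤ 1 := by
  refine le_of_tendsto (tendsto_measure_Iic_atTop μ) (Filter.eventually_atTop.2 ⟨0, fun x hx => ?_⟩)
  rw [hμ.2 x hx, ← ENNReal.ofReal_one]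
  exact ENNReal.ofReal_le_ofReal (minkQ_le_one x)

lemma isFiniteMeasure (hμ : IsMinkowskiMeasure μ) : IsFiniteMeasure μ :=
  ⟨hμ.measure_univ_le_one.trans_lt ENNReal.one_lt_top⟩

lemma measureReal_Iic_inv_natCast (hμ : IsMinkowskiMeasure μ) {n : ℕ} (hn : 1 ≤ n) :
    μ.real (Set.Iic (n : ℝ)⁻¹) = (2 : ℝ) ^ (-(n : ℝ)) := by
  rw [measureReal_def, hμ.2 _ (by positivity), minkQ_inv_natCast hn,
    ENNReal.toReal_ofReal (by positivity)]

lemma exp_neg_le_mEGF_neg (hμ : IsMinkowskiMeasure μ) {n : ℕ} (hn : 1 ≤ n) {t : ℝ}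
    (ht : 0 ≤ t) : Real.exp (-(t / n + n * Real.log 2)) ≤ mEGF μ (-t) := by
  have := hμ.isFiniteMeasure
  calc Real.exp (-(t / n + n * Real.log 2))
      = Real.exp (-((n : ℝ)⁻¹ * t)) * (2 : ℝ) ^ (-(n : ℝ)) := by
        rw [Real.rpow_def_of_pos two_pos, ← Real.exp_add]
        ring_nf
    _ = Real.exp (-((n : ℝ)⁻¹ * t)) * μ.real (Set.Iic (n : ℝ)⁻¹) := by
        rw [hμ.measureReal_Iic_inv_natCast hn]
    _ ≤ mEGF μ (-t) := exp_neg_mul_mul_measureReal_Iic_le_mEGF_neg hμ.ae_nonneg ht _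

lemma mEGF_neg_le_exp_add_exp (hμ : IsMinkowskiMeasure μ) {n : ℕ} (hn : 1 ≤ n) {t : ℝ}
    (ht : 0 ≤ t) :
    mEGF μ (-t) ≤ Real.exp (-(n * Real.log 2)) + Real.exp (-(t / (n + 1))) := by
  have := hμ.isFiniteMeasure
  have hμ_univ : μ.real Set.univ ≤ 1 :=
    ENNReal.toReal_le_of_le_ofReal zero_le_one (ENNReal.ofReal_one ▸ hμ.measure_univ_le_one)
  have hδ : (n : ℝ)⁻¹ / ((n : ℝ)⁻¹ + 1) * t = t / (n + 1) := by
    field_simp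
    ring
  calc mEGF μ (-t)
      ≤ μ.real (Set.Iic (n : ℝ)⁻¹)
          + Real.exp (-((n : ℝ)⁻¹ / ((n : ℝ)⁻¹ + 1) * t)) * μ.real Set.univ :=
        mEGF_neg_le_measureReal_Iic_add hμ.ae_nonneg ht (by positivity)
    _ ≤ (2 : ℝ) ^ (-(n : ℝ)) + Real.exp (-(t / (n + 1))) * 1 := by
        rw [hμ.measureReal_Iic_inv_natCast hn, hδ]
        gcongr
    _ = Real.exp (-(n * Real.log 2)) + Real.exp (-(t / (n + 1))) := by
        rw [Real.rpow_def_of_pos two_pos, mul_one]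
        ring_nf

end IsMinkowskiMeasure

section CeilArithmetic

variable {b u : ℝ} {n : ℕ}

lemma sq_div_add_mul_sq_le (hb : 0 < b) (hu : 0 ≤ u) (hn : 0 < n) (hbn : u / b ≤ n)
    (hnb : n < u / b + 1) : u ^ 2 / n + n * b ^ 2 ≤ 2 * (b * u) + b ^ 2 := by
  rw [div_le_iff₀ hb] at hbn
  rw [← sub_lt_iff_lt_add, lt_div_iff₀ hb] at hnb
  have : u ^ 2 / n ≤ b * u := by
    rw [div_le_iff₀ (by positivity)]
    nlinarith
  nlinarith

lemma mul_le_natCast_mul_sq (hb : 0 < b) (hbn : u / b ≤ n) : b * u ≤ n * b ^ 2 := by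
  rw [div_le_iff₀ hb] at hbn
  nlinarith

lemma mul_sub_le_sq_div (hb : 0 < b) (hnb : n < u / b + 1) :
    b * u - 2 * b ^ 2 ≤ u ^ 2 / (n + 1) := by
  rw [← sub_lt_iff_lt_add, lt_div_iff₀ hb] at hnb
  rw [le_div_iff₀ (by positivity)]
  rcases le_total u (2 * b) with h | h
  · nlinarith [mul_nonneg (mul_nonneg hb.le (sub_nonneg.2 h)) (by positivity : (0 : ℝ) ≤ n + 1)]
  · nlinarith

end CeilArithmetic

/-- With `C = e^{−√(log 2)}` one has `C^{2√t} ≪ m(−t) ≪ C^{√t}` as `t → ∞`. -/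
theorem mEGF_neg_bounds (μ : Measure ℝ) (hμ : IsMinkowskiMeasure μ) :
    ∃ c₁ : ℝ, 0 < c₁ ∧ ∃ c₂ : ℝ, 0 < c₂ ∧ ∃ t₀ : ℝ, ∀ t : ℝ, t₀ ≤ t →
      c₁ * Real.exp (-Real.sqrt (Real.log 2)) ^ (2 * Real.sqrt t) ≤ mEGF μ (-t) ∧
      mEGF μ (-t) ≤ c₂ * Real.exp (-Real.sqrt (Real.log 2)) ^ Real.sqrt t := by
  set b := Real.sqrt (Real.log 2)
  have hb : 0 < b := Real.sqrt_pos.2 (Real.log_pos one_lt_two)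
  have hb2 : b ^ 2 = Real.log 2 := Real.sq_sqrt (Real.log_pos one_lt_two).le
  refine ⟨Real.exp (-b ^ 2), Real.exp_pos _, 1 + Real.exp (2 * b ^ 2), by positivity, 1,
    fun t ht => ?_⟩
  obtain ⟨u, hu, rfl⟩ : ∃ u, 0 < u ∧ t = u ^ 2 :=
    ⟨Real.sqrt t, Real.sqrt_pos.2 (by linarith), (Real.sq_sqrt (by linarith)).symm⟩
  obtain ⟨n, hn, hbn, hnb⟩ : ∃ n : ℕ, 0 < n ∧ u / b ≤ n ∧ n < u / b + 1 :=
    ⟨⌈u / b⌉₊, Nat.ceil_pos.2 (by positivity), Nat.le_ceil _, Nat.ceil_lt_add_one (by positivity)⟩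
  rw [Real.sqrt_sq hu.le, ← Real.exp_mul, ← Real.exp_mul]
  constructor
  · calc Real.exp (-b ^ 2) * Real.exp (-b * (2 * u))
        = Real.exp (-(2 * (b * u) + b ^ 2)) := by rw [← Real.exp_add]; ring_nf
      _ ≤ Real.exp (-(u ^ 2 / n + n * b ^ 2)) :=
          Real.exp_le_exp.2 (neg_le_neg (sq_div_add_mul_sq_le hb hu.le hn hbn hnb))
      _ ≤ mEGF μ (-u ^ 2) := hb2 ▸ hμ.exp_neg_le_mEGF_neg hn (by positivity)
  · calc mEGF μ (-u ^ 2)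
        ≤ Real.exp (-(n * b ^ 2)) + Real.exp (-(u ^ 2 / (n + 1))) :=
          hb2 ▸ hμ.mEGF_neg_le_exp_add_exp hn (by positivity)
      _ ≤ Real.exp (-(b * u)) + Real.exp (2 * b ^ 2 - b * u) :=
          add_le_add (Real.exp_le_exp.2 (neg_le_neg (mul_le_natCast_mul_sq hb hbn)))
            (Real.exp_le_exp.2 (by linarith [mul_sub_le_sq_div hb hnb]))
      _ = (1 + Real.exp (2 * b ^ 2)) * Real.exp (-b * u) := by
          rw [sub_eq_add_neg, Real.exp_add]
          ring_nf
end

section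
/- For every real t one has m(t) = e^t · m(−t). -/
open scoped Classical
open MeasureTheory

namespace MinkAux

noncomputable def f (x : ℝ) (k : ℕ) : ℝ :=
  (cfSum x k).elim 0 fun s => (-1 : ℝ) ^ (k + 1) * (2 : ℝ) ^ (-s)

lemma minkQ_eq (x : ℝ) : minkQ x = 1 + ∑' k : ℕ, f x k := rfl

lemma cfSum_zero (x : ℝ) : cfSum x 0 = some ((⌊x⌋ : ℤ) : ℝ) := rfl

lemma cfSum_succ (x : ℝ) (k : ℕ) : cfSum x (k + 1) = (cfSum x k).bind fun s =>
    ((GenContFract.of x).partDens.get? k).map fun b => s + b := rfl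

lemma cfSum_ge (x : ℝ) : ∀ (k : ℕ) (s : ℝ), cfSum x k = some s → (⌊x⌋ : ℝ) + k ≤ s := by
  intro k
  induction k with
  | zero =>
    intro s h
    rw [cfSum_zero] at h
    cases h
    simp
  | succ k ih =>
    intro s h
    rw [cfSum_succ] at h
    cases hc : cfSum x k with
    | none => rw [hc] at h; simp at h
    | some s' =>
      rw [hc] at h
      cases hb : (GenContFract.of x).partDens.get? k with
      | none => rw [hb] at h; simp at h
      | some b =>
        rw [hb] at h
        simp at h
        have h1 : (1 : ℝ) ≤ b := GenContFract.of_one_le_get?_partDen hb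
        have h2 := ih s' hc
        push_cast
        rw [← h]
        push_cast at h2
        linarith

lemma abs_f_le (x : ℝ) (k : ℕ) : |f x k| ≤ (2 : ℝ) ^ (-((⌊x⌋ : ℝ) + k)) := by
  unfold f
  cases hc : cfSum x k with
  | none =>
    simp only [Option.elim_none, abs_zero]
    positivity
  | some s =>
    simp only [Option.elim_some]
    rw [abs_mul, abs_pow, abs_neg, abs_one, one_pow, one_mul,
      abs_of_pos (Real.rpow_pos_of_pos two_pos _)]
    exact Real.rpow_le_rpow_of_exponent_le one_le_two (neg_le_neg (cfSum_ge x k s hc))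

lemma geom_eval (a : ℝ) (k : ℕ) : (2 : ℝ) ^ (-(a + (k : ℝ))) = (2 : ℝ) ^ (-a) * (2⁻¹ : ℝ) ^ k := by
  rw [neg_add, Real.rpow_add two_pos]
  congr 1
  rw [Real.rpow_neg (by norm_num), Real.rpow_natCast, ← inv_pow]

lemma summable_f (x : ℝ) : Summable (f x) := by
  apply Summable.of_norm_bounded (g := fun k : ℕ => (2 : ℝ) ^ (-((⌊x⌋ : ℝ) + (k : ℝ))))
  · simp_rw [geom_eval]
    exact (summable_geometric_of_lt_one (by norm_num) (by norm_num)).mul_left _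
  · intro k; exact abs_f_le x k

lemma f_zero_of_floor_zero {x : ℝ} (h : ⌊x⌋ = 0) : f x 0 = -1 := by
  unfold f
  rw [cfSum_zero, h]
  norm_num

lemma tsum_tail_le (x : ℝ) : ∑' k : ℕ, f x (k + 1) ≤ (2 : ℝ) ^ (-(⌊x⌋ : ℝ)) := by
  have hs : Summable fun k : ℕ => f x (k + 1) := (summable_nat_add_iff 1).2 (summable_f x)
  have hg : Summable fun k : ℕ => (2 : ℝ) ^ (-((⌊x⌋ : ℝ) + ((k : ℝ) + 1))) := by
    have : (fun k : ℕ => (2 : ℝ) ^ (-((⌊x⌋ : ℝ) + ((k : ℝ) + 1)))) =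
        fun k : ℕ => ((2 : ℝ) ^ (-(⌊x⌋ : ℝ)) * 2⁻¹) * (2⁻¹ : ℝ) ^ k := by
      funext k
      rw [show -((⌊x⌋:ℝ) + ((k:ℝ)+1)) = -(((⌊x⌋:ℝ)+1) + (k:ℝ)) by ring, geom_eval,
        neg_add, Real.rpow_add two_pos, Real.rpow_neg_one]
    rw [this]
    exact (summable_geometric_of_lt_one (by norm_num) (by norm_num)).mul_left _
  calc ∑' k : ℕ, f x (k + 1) ≤ ∑' k : ℕ, (2 : ℝ) ^ (-((⌊x⌋ : ℝ) + ((k : ℝ) + 1))) := by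
        apply Summable.tsum_le_tsum _ hs hg
        intro k
        refine (le_abs_self _).trans ?_
        have := abs_f_le x (k + 1)
        push_cast at this ⊢
        convert this using 3
    _ = (2 : ℝ) ^ (-(⌊x⌋ : ℝ)) := by
        have : (fun k : ℕ => (2 : ℝ) ^ (-((⌊x⌋ : ℝ) + ((k : ℝ) + 1)))) =
            fun k : ℕ => ((2 : ℝ) ^ (-(⌊x⌋ : ℝ)) * 2⁻¹) * (2⁻¹ : ℝ) ^ k := by
          funext k
          rw [show -((⌊x⌋:ℝ) + ((k:ℝ)+1)) = -(((⌊x⌋:ℝ)+1) + (k:ℝ)) by ring, geom_eval,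
            neg_add, Real.rpow_add two_pos, Real.rpow_neg_one]
        rw [this, tsum_mul_left, tsum_geometric_of_lt_one (by norm_num) (by norm_num)]
        norm_num
        ring

lemma minkQ_le_one (x : ℝ) : minkQ x ≤ 1 := by
  rw [minkQ_eq, Summable.tsum_eq_zero_add (summable_f x)]
  have h0 : f x 0 = -(2 : ℝ) ^ (-(⌊x⌋ : ℝ)) := by
    unfold f
    rw [cfSum_zero]
    norm_num
  have := tsum_tail_le x
  rw [h0]
  linarith

lemma partDens_get?_succ {x : ℝ} (h0 : 0 < x) (h1 : x < 1) (n : ℕ) :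
    (GenContFract.of x).partDens.get? (n + 1) = (GenContFract.of x⁻¹).partDens.get? n := by
  have hf : Int.fract x = x := Int.fract_eq_self.mpr ⟨h0.le, h1⟩
  unfold GenContFract.partDens
  rw [Stream'.Seq.map_get?, Stream'.Seq.map_get?, GenContFract.of_s_succ, hf]

lemma partDens_get?_zero {x : ℝ} (h0 : 0 < x) (h1 : x < 1) :
    (GenContFract.of x).partDens.get? 0 = some ((⌊x⁻¹⌋ : ℤ) : ℝ) := by
  have hf : Int.fract x = x := Int.fract_eq_self.mpr ⟨h0.le, h1⟩
  have hne : Int.fract x ≠ 0 := by rw [hf]; exact h0.ne'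
  have hh := GenContFract.of_s_head hne
  rw [hf] at hh
  unfold GenContFract.partDens
  rw [Stream'.Seq.map_get?]
  have : (GenContFract.of x).s.get? 0 = some ⟨1, ((⌊x⁻¹⌋ : ℤ) : ℝ)⟩ := hh
  rw [this]
  rfl

lemma cfSum_inv {x : ℝ} (h0 : 0 < x) (h1 : x < 1) (k : ℕ) :
    cfSum x (k + 1) = cfSum x⁻¹ k := by
  induction k with
  | zero =>
    have hfl : ⌊x⌋ = 0 := Int.floor_eq_zero_iff.mpr ⟨h0.le, h1⟩
    rw [cfSum_succ, cfSum_zero, partDens_get?_zero h0 h1, cfSum_zero, hfl]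
    simp
  | succ k ih =>
    rw [cfSum_succ, ih, partDens_get?_succ h0 h1, ← cfSum_succ]

lemma f_succ_eq_neg {x : ℝ} (h0 : 0 < x) (h1 : x < 1) (k : ℕ) :
    f x (k + 1) = -f x⁻¹ k := by
  unfold f
  rw [cfSum_inv h0 h1]
  cases cfSum x⁻¹ k with
  | none => simp
  | some s =>
    simp only [Option.elim_some]
    ring

lemma minkQ_add_minkQ_inv_of_lt_one {x : ℝ} (h0 : 0 < x) (h1 : x < 1) :
    minkQ x + minkQ x⁻¹ = 1 := by
  have hfl : ⌊x⌋ = 0 := Int.floor_eq_zero_iff.mpr ⟨h0.le, h1⟩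
  have h2 : ∑' k : ℕ, f x k = f x 0 + ∑' k : ℕ, f x (k + 1) := Summable.tsum_eq_zero_add (summable_f x)
  have h3 : ∑' k : ℕ, f x (k + 1) = -∑' k : ℕ, f x⁻¹ k := by
    simp_rw [f_succ_eq_neg h0 h1]
    exact tsum_neg
  have h4 : f x 0 = -1 := f_zero_of_floor_zero hfl
  rw [minkQ_eq, minkQ_eq, h2, h3, h4]
  ring

lemma partDens_int (a : ℤ) (n : ℕ) :
    (GenContFract.of ((a : ℤ) : ℝ)).partDens.get? n = none := by
  have ht : (GenContFract.of ((a : ℤ) : ℝ)).TerminatedAt n := by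
    rw [GenContFract.of_terminatedAt_n_iff_succ_nth_intFractPair_stream_eq_none]
    exact GenContFract.IntFractPair.stream_succ_of_int a n
  exact GenContFract.terminatedAt_iff_partDen_none.mp ht

lemma cfSum_int_succ (a : ℤ) (k : ℕ) : cfSum ((a : ℤ) : ℝ) (k + 1) = none := by
  rw [cfSum_succ, partDens_int]
  cases cfSum ((a : ℤ) : ℝ) k <;> simp

lemma minkQ_int (a : ℤ) : minkQ ((a : ℤ) : ℝ) = 1 - (2 : ℝ) ^ (-(a : ℝ)) := by
  rw [minkQ_eq]
  have h1 : ∑' k : ℕ, f ((a : ℤ) : ℝ) k = f ((a : ℤ) : ℝ) 0 := by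
    apply tsum_eq_single
    intro b hb
    obtain ⟨k, rfl⟩ := Nat.exists_eq_succ_of_ne_zero hb
    unfold f
    rw [cfSum_int_succ]
    rfl
  rw [h1]
  unfold f
  rw [cfSum_zero, Int.floor_intCast]
  simp
  ring

lemma minkQ_one : minkQ (1 : ℝ) = 1 / 2 := by
  have := minkQ_int 1
  push_cast at this
  rw [this, Real.rpow_neg_one]
  norm_num

lemma minkQ_zero : minkQ (0 : ℝ) = 0 := by
  have := minkQ_int 0
  push_cast at this
  rw [this]
  norm_num

lemma minkQ_add_minkQ_inv {x : ℝ} (hx : 0 < x) : minkQ x + minkQ x⁻¹ = 1 := by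
  rcases lt_trichotomy x 1 with h | h | h
  · exact minkQ_add_minkQ_inv_of_lt_one hx h
  · rw [h, inv_one, minkQ_one]; norm_num
  · have h2 := minkQ_add_minkQ_inv_of_lt_one (inv_pos.2 hx) (inv_lt_one_of_one_lt₀ h)
    rw [inv_inv] at h2
    linarith

lemma minkQ_nonneg {x : ℝ} (hx : 0 ≤ x) : 0 ≤ minkQ x := by
  rcases hx.lt_or_eq with h | h
  · have := minkQ_add_minkQ_inv h
    have h2 := minkQ_le_one x⁻¹
    linarith
  · rw [← h, minkQ_zero]
end MinkAux

namespace MinkAux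

lemma Iic_eq_iInter (w : ℝ) : Set.Iic w = ⋂ n : ℕ, Set.Iic (w + ((n : ℝ) + 1)⁻¹) := by
  ext y
  simp only [Set.mem_iInter, Set.mem_Iic]
  constructor
  · intro h n
    have : (0:ℝ) < ((n : ℝ) + 1)⁻¹ := by positivity
    linarith
  · intro h
    by_contra hc
    push_neg at hc
    obtain ⟨n, hn⟩ := exists_nat_one_div_lt (sub_pos.2 hc)
    have := h n
    rw [one_div] at hn
    linarith

lemma Iio_eq_iUnion (z : ℝ) : Set.Iio z = ⋃ n : ℕ, Set.Iic (z - ((n : ℝ) + 1)⁻¹) := by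
  ext y
  simp only [Set.mem_iUnion, Set.mem_Iic, Set.mem_Iio]
  constructor
  · intro h
    obtain ⟨n, hn⟩ := exists_nat_one_div_lt (sub_pos.2 h)
    rw [one_div] at hn
    exact ⟨n, by linarith⟩
  · rintro ⟨n, hn⟩
    have : (0:ℝ) < ((n : ℝ) + 1)⁻¹ := by positivity
    linarith

variable {μ : Measure ℝ}

lemma inf_eq (hμ : IsMinkowskiMeasure μ) {w : ℝ} (hw : 0 ≤ w) :
    ⨅ n : ℕ, ENNReal.ofReal (minkQ (w + ((n : ℝ) + 1)⁻¹)) = μ (Set.Iic w) := by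
  have hanti : Antitone fun n : ℕ => Set.Iic (w + ((n : ℝ) + 1)⁻¹) := by
    intro m n hmn
    apply Set.Iic_subset_Iic.2
    have h1 : ((m : ℝ) + 1) ≤ ((n : ℝ) + 1) := by exact_mod_cast by omega
    have := inv_anti₀ (by positivity) h1
    linarith
  rw [Iic_eq_iInter w, hanti.measure_iInter (fun n => measurableSet_Iic.nullMeasurableSet)
    ⟨0, by rw [hμ.2 _ (by positivity)]; exact ENNReal.ofReal_ne_top⟩]
  exact iInf_congr fun n => (hμ.2 _ (by positivity)).symm

lemma term_eq (hμ : IsMinkowskiMeasure μ) {w : ℝ} (hw : 0 ≤ w) (n : ℕ) :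
    ENNReal.ofReal (1 - minkQ (w + ((n : ℝ) + 1)⁻¹)) = μ (Set.Iic ((w + ((n : ℝ) + 1)⁻¹)⁻¹)) := by
  have hwn : (0:ℝ) < w + ((n : ℝ) + 1)⁻¹ := by positivity
  have hsym := minkQ_add_minkQ_inv hwn
  rw [hμ.2 _ (le_of_lt (inv_pos.2 hwn))]
  congr 1
  linarith

lemma sup_eq (hμ : IsMinkowskiMeasure μ) {w : ℝ} (hw : 0 ≤ w) :
    ⨆ n : ℕ, ENNReal.ofReal (1 - minkQ (w + ((n : ℝ) + 1)⁻¹)) = 1 - μ (Set.Iic w) := by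
  have h1 : ∀ n : ℕ, ENNReal.ofReal (1 - minkQ (w + ((n : ℝ) + 1)⁻¹)) =
      1 - ENNReal.ofReal (minkQ (w + ((n : ℝ) + 1)⁻¹)) := by
    intro n
    rw [ENNReal.ofReal_sub _ (minkQ_nonneg (by positivity)), ENNReal.ofReal_one]
  simp_rw [h1]
  rw [← ENNReal.sub_iInf, inf_eq hμ hw]

lemma meas_Iic_zero (hμ : IsMinkowskiMeasure μ) : μ (Set.Iic 0) = 0 := by
  rw [hμ.2 0 le_rfl, minkQ_zero, ENNReal.ofReal_zero]

lemma univ_eq (hμ : IsMinkowskiMeasure μ) : μ Set.univ = 1 := by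
  apply le_antisymm
  · have huniv : (Set.univ : Set ℝ) = ⋃ n : ℕ, Set.Iic (n : ℝ) := by
      ext y
      simp only [Set.mem_univ, Set.mem_iUnion, Set.mem_Iic, true_iff]
      obtain ⟨n, hn⟩ := exists_nat_ge y
      exact ⟨n, hn⟩
    have hmono : Monotone fun n : ℕ => Set.Iic ((n : ℝ)) := fun m n h =>
      Set.Iic_subset_Iic.2 (by exact_mod_cast h)
    rw [huniv, hmono.measure_iUnion]
    apply iSup_le
    intro n
    rw [hμ.2 _ (by positivity)]
    exact ENNReal.ofReal_le_one.2 (minkQ_le_one _)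
  · have h := sup_eq hμ (le_refl 0)
    rw [meas_Iic_zero hμ, tsub_zero] at h
    rw [← h]
    apply iSup_le
    intro n
    rw [term_eq hμ (le_refl 0) n]
    exact measure_mono (Set.subset_univ _)

lemma Iio_eq (hμ : IsMinkowskiMeasure μ) {z : ℝ} (hz : 0 < z) :
    μ (Set.Iio z) = ENNReal.ofReal (minkQ z) := by
  have hmono : Monotone fun n : ℕ => Set.Iic (z - ((n : ℝ) + 1)⁻¹) := by
    intro m n hmn
    apply Set.Iic_subset_Iic.2
    have h1 : ((m : ℝ) + 1) ≤ ((n : ℝ) + 1) := by exact_mod_cast by omega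
    have := inv_anti₀ (by positivity) h1
    linarith
  rw [Iio_eq_iUnion z, hmono.measure_iUnion]
  apply le_antisymm
  · apply iSup_le
    intro n
    have : (0:ℝ) < ((n : ℝ) + 1)⁻¹ := by positivity
    rw [← hμ.2 z hz.le]
    exact measure_mono (Set.Iic_subset_Iic.2 (by linarith))
  · set w := z⁻¹ with hw
    have hw0 : 0 < w := inv_pos.2 hz
    have hkey : ENNReal.ofReal (minkQ z) = ⨆ n : ℕ, ENNReal.ofReal (1 - minkQ (w + ((n : ℝ) + 1)⁻¹)) := by
      rw [sup_eq hμ hw0.le, hμ.2 w hw0.le,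
        ← ENNReal.ofReal_one, ← ENNReal.ofReal_sub _ (minkQ_nonneg hw0.le)]
      congr 1
      have := minkQ_add_minkQ_inv hz
      rw [← hw] at this
      linarith
    rw [hkey]
    apply iSup_le
    intro n
    rw [term_eq hμ hw0.le n]
    have hwn : (0:ℝ) < w + ((n : ℝ) + 1)⁻¹ := by positivity
    have hlt : (w + ((n : ℝ) + 1)⁻¹)⁻¹ < z := by
      have h1 : z⁻¹ < w + ((n : ℝ) + 1)⁻¹ := by
        have : (0:ℝ) < ((n : ℝ) + 1)⁻¹ := by positivity
        rw [hw]; linarith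
      calc (w + ((n : ℝ) + 1)⁻¹)⁻¹ < (z⁻¹)⁻¹ :=
            inv_strictAnti₀ (inv_pos.2 hz) h1
        _ = z := inv_inv z
    obtain ⟨m, hm⟩ := exists_nat_one_div_lt (sub_pos.2 hlt)
    rw [one_div] at hm
    refine le_trans (measure_mono (Set.Iic_subset_Iic.2 ?_)) (le_iSup (fun m : ℕ => μ (Set.Iic (z - ((m : ℝ) + 1)⁻¹))) m)
    linarith

lemma map_inv_eq (hμ : IsMinkowskiMeasure μ) : μ.map (fun y : ℝ => y⁻¹) = μ := by
  have hfin : IsFiniteMeasure μ := ⟨by rw [univ_eq hμ]; exact ENNReal.one_lt_top⟩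
  refine (MeasureTheory.Measure.ext_of_Iic μ _ fun a => ?_).symm
  rw [MeasureTheory.Measure.map_apply measurable_inv measurableSet_Iic]
  rcases lt_trichotomy a 0 with ha | ha | ha
  · have h1 : μ (Set.Iic a) = 0 :=
      measure_mono_null (fun y hy => lt_of_le_of_lt hy ha) hμ.1
    have h2 : μ ((fun y : ℝ => y⁻¹) ⁻¹' Set.Iic a) = 0 := by
      apply measure_mono_null _ hμ.1
      intro y hy
      simp only [Set.mem_preimage, Set.mem_Iic] at hy
      simp only [Set.mem_Iio]
      exact inv_lt_zero.mp (lt_of_le_of_lt hy ha)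
    rw [h1, h2]
  · subst ha
    have : (fun y : ℝ => y⁻¹) ⁻¹' Set.Iic 0 = Set.Iic 0 := by
      ext y
      simp [inv_nonpos]
    rw [this]
  · have hpre : (fun y : ℝ => y⁻¹) ⁻¹' Set.Iic a = Set.Iic 0 ∪ Set.Ici a⁻¹ := by
      ext y
      simp only [Set.mem_preimage, Set.mem_Iic, Set.mem_union, Set.mem_Ici]
      constructor
      · intro h
        rcases le_or_gt y 0 with h' | h'
        · exact Or.inl h'
        · exact Or.inr ((inv_le_comm₀ h' ha).mp h)
      · rintro (h | h)
        · exact le_trans (inv_nonpos.2 h) ha.le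
        · calc y⁻¹ ≤ (a⁻¹)⁻¹ := inv_anti₀ (inv_pos.2 ha) h
            _ = a := inv_inv a
    rw [hpre]
    have hu : μ (Set.Iic 0 ∪ Set.Ici a⁻¹) = μ (Set.Ici a⁻¹) := by
      apply le_antisymm
      · refine le_trans (measure_union_le _ _) ?_
        rw [meas_Iic_zero hμ, zero_add]
      · exact measure_mono Set.subset_union_right
    rw [hu]
    have hsplit : μ (Set.Iio a⁻¹) + μ (Set.Ici a⁻¹) = 1 := by
      rw [← measure_union (Set.Iio_disjoint_Ici le_rfl) measurableSet_Ici,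
        Set.Iio_union_Ici, univ_eq hμ]
    have hIio := Iio_eq hμ (inv_pos.2 ha)
    have hIci : μ (Set.Ici a⁻¹) = 1 - ENNReal.ofReal (minkQ a⁻¹) := by
      rw [← hIio]
      exact ENNReal.eq_sub_of_add_eq (by rw [hIio]; exact ENNReal.ofReal_ne_top)
        (by rw [add_comm]; exact hsplit)
    rw [hμ.2 a ha.le, hIci]
    have hsym := minkQ_add_minkQ_inv ha
    rw [show minkQ a = 1 - minkQ a⁻¹ by linarith,
      ENNReal.ofReal_sub _ (minkQ_nonneg (inv_pos.2 ha).le), ENNReal.ofReal_one]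

end MinkAux

/-- The symmetry `m(t) = e^t · m(−t)` for every real `t`. -/
theorem mEGF_eq_exp_mul_mEGF_neg (μ : Measure ℝ) (hμ : IsMinkowskiMeasure μ) (t : ℝ) :
    mEGF μ t = Real.exp t * mEGF μ (-t) := by
  have hmap := MinkAux.map_inv_eq hμ
  have hmeas : Measurable fun x : ℝ => Real.exp (x * t / (x + 1)) :=
    Real.measurable_exp.comp ((measurable_id.mul_const t).div (measurable_id.add_const 1))
  have h1 : mEGF μ t = ∫ x, Real.exp (x⁻¹ * t / (x⁻¹ + 1)) ∂μ := by
    rw [mEGF]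
    conv_lhs => rw [← hmap]
    exact MeasureTheory.integral_map measurable_inv.aemeasurable hmeas.aestronglyMeasurable
  have hae : ∀ᵐ x ∂μ, 0 < x := by
    rw [MeasureTheory.ae_iff]
    have hset : {x : ℝ | ¬ 0 < x} = Set.Iic 0 := by ext y; simp
    rw [hset]
    exact MinkAux.meas_Iic_zero hμ
  have h2 : (∫ x, Real.exp (x⁻¹ * t / (x⁻¹ + 1)) ∂μ)
      = ∫ x, Real.exp t * Real.exp (x * -t / (x + 1)) ∂μ := by
    apply MeasureTheory.integral_congr_ae
    filter_upwards [hae] with x hx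
    rw [← Real.exp_add]
    congr 1
    have hx0 : x ≠ 0 := hx.ne'
    have hx1 : x + 1 ≠ 0 := by nlinarith
    have hx2 : x⁻¹ + 1 ≠ 0 := by
      have := inv_pos.2 hx
      nlinarith
    field_simp
    ring
  rw [h1, h2, MeasureTheory.integral_const_mul, mEGF]
end

section
/- Suppose G₀ is holomorphic on ℂ ∖ (1,∞), satisfies the homogeneous three-term functional equation (1/z^2)·G₀(1/z) + 2·G₀(z+1) = G₀(z) for all z ∈ ℂ ∖ (0,∞), z ≠ 0, and G₀(z) → 0 as |z| → ∞ with the distance from z to ℝ_+ tending to infinity. Then G₀ ≡ 0. Consequently, a holomorphic function on ℂ ∖ (1,∞) satisfying the inhomogeneous equation 1/z + (1/z^2)·G(1/z) + 2·G(z+1) = G(z) together with this decay condition is unique. -/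
/-!
For `x ∈ [-1, 0]`, iterating the functional equation `n` times writes `G₀ x` as
`2⁻ⁿ G₀ (x - n)` minus the terms `(2^(k+1) (x-k-1)²)⁻¹ G₀ (1/(x-k-1))`, `k < n`, whose arguments
`1/(x-k-1)` lie in `[-1, 0]` again. With `M` the maximum of `‖G₀‖` on `[-1, 0]`, these terms
contribute at most `M ∑ 1/(2^k k²) ≤ 5M/8`, while `G₀ (x - n) → 0` by the decay hypothesis; at a
maximiser this gives `M ≤ 5M/8`, so `M = 0`. The identity theorem on the connected open set
`ℂ ∖ [1, ∞)` and continuity at `1` then give `G₀ = 0`. Uniqueness for the inhomogeneous equation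
follows by applying this to the difference of two solutions.
-/

/-- The cut plane `ℂ ∖ (1, ∞)`. -/
def cutPlaneOne : Set ℂ := {z : ℂ | z.im ≠ 0 ∨ z.re ≤ 1}

/-- The cut plane `ℂ ∖ (0, ∞)`. -/
def cutPlaneZero : Set ℂ := {z : ℂ | z.im ≠ 0 ∨ z.re ≤ 0}

/-- `G(z) → 0` as `z → ∞` in such a way that the distance from `z` to the
positive real axis `ℝ₊` tends to infinity. -/
def DecaysAwayFromPosAxis (G : ℂ → ℂ) : Prop :=
  ∀ ε : ℝ, 0 < ε → ∃ R : ℝ, ∀ z : ℂ,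
    R ≤ Metric.infDist z {w : ℂ | w.im = 0 ∧ 0 ≤ w.re} → ‖G z‖ ≤ ε

open Complex Metric Filter Finset Topology Set

def SatisfiesDyadicFE (G : ℂ → ℂ) : Prop :=
  ∀ z ∈ cutPlaneZero, z ≠ 0 → (z ^ 2)⁻¹ * G z⁻¹ + 2 * G (z + 1) = G z

-- The series sums to `π²/12 - (log 2)²/2 ≈ 0.58`; any bound below `1` would do.
lemma sum_range_inv_two_pow_mul_sq_le (n : ℕ) :
    ∑ k ∈ range n, ((2 : ℝ) ^ (k + 1) * ((k : ℝ) + 1) ^ 2)⁻¹ ≤ 5 / 8 := by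
  rcases n with _ | n
  · norm_num
  have hterm (k : ℕ) :
      ((2 : ℝ) ^ (k + 1 + 1) * (((k + 1 : ℕ) : ℝ) + 1) ^ 2)⁻¹ ≤ 1 / 16 * (1 / 2) ^ k := by
    rw [one_div_pow, one_div, one_div, ← mul_inv]
    refine inv_anti₀ (by positivity) ?_
    have hk : (4 : ℝ) ≤ ((k + 1 : ℕ) + 1) ^ 2 := by push_cast; nlinarith [k.cast_nonneg (α := ℝ)]
    calc (16 : ℝ) * 2 ^ k = 2 ^ (k + 1 + 1) * 4 := by ring
      _ ≤ _ := by gcongr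
  calc ∑ k ∈ range (n + 1), ((2 : ℝ) ^ (k + 1) * ((k : ℝ) + 1) ^ 2)⁻¹
      = ∑ k ∈ range n, ((2 : ℝ) ^ (k + 1 + 1) * (((k + 1 : ℕ) : ℝ) + 1) ^ 2)⁻¹ + 1 / 2 := by
        rw [sum_range_succ']; norm_num
    _ ≤ 1 / 16 * ∑ k ∈ range n, (1 / 2 : ℝ) ^ k + 1 / 2 := by
        rw [mul_sum]; gcongr with k; exact hterm k
    _ ≤ 5 / 8 := by linarith [sum_geometric_two_le n]

lemma sub_natCast_add_one_mem_cutPlaneZero {z : ℂ} (hz : z ∈ cutPlaneZero) (k : ℕ) :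
    z - (k + 1) ∈ cutPlaneZero ∧ z - (k + 1) ≠ 0 := by
  rcases hz with him | hre
  · exact ⟨Or.inl (by simpa using him), fun h => him (by simpa using congrArg im h)⟩
  · have hneg : (z - (k + 1)).re < 0 := by
      simp only [sub_re, add_re, natCast_re, one_re]
      linarith [k.cast_nonneg (α := ℝ)]
    exact ⟨Or.inr hneg.le, fun h => hneg.ne (by rw [h, zero_re])⟩

lemma inv_mem_Icc_neg_one_zero {y : ℝ} (hy : y ≤ -1) : y⁻¹ ∈ Icc (-1 : ℝ) 0 := by
  have hy0 : y < 0 := by linarith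
  refine ⟨?_, inv_nonpos.2 hy0.le⟩
  rw [neg_le, ← inv_neg]
  exact inv_le_one_of_one_le₀ (by linarith)

namespace SatisfiesDyadicFE

variable {G : ℂ → ℂ}

lemma eq_iterate (hG : SatisfiesDyadicFE G) {z : ℂ} (hz : z ∈ cutPlaneZero) (n : ℕ) :
    G z = (2 ^ n)⁻¹ * G (z - n) -
      ∑ k ∈ range n, (2 ^ (k + 1) * (z - (k + 1)) ^ 2)⁻¹ * G (z - (k + 1))⁻¹ := by
  induction n with
  | zero => simp
  | succ n ih =>
    obtain ⟨hmem, hne⟩ := sub_natCast_add_one_mem_cutPlaneZero hz n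
    have hstep := hG _ hmem hne
    rw [show z - (n + 1) + 1 = z - n by ring] at hstep
    rw [ih, sum_range_succ, Nat.cast_succ]
    generalize z - (n + 1) = w at hstep ⊢
    linear_combination (2 ^ (n + 1))⁻¹ * hstep

lemma norm_le_of_forall_Icc (hG : SatisfiesDyadicFE G) {M : ℝ}
    (hM : ∀ y ∈ Icc (-1 : ℝ) 0, ‖G y‖ ≤ M) {x : ℝ} (hx : x ∈ Icc (-1 : ℝ) 0) (n : ℕ) :
    ‖G x‖ ≤ (2 ^ n)⁻¹ * ‖G (x - n)‖ + 5 / 8 * M := by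
  have hM0 : 0 ≤ M := (norm_nonneg _).trans (hM x hx)
  have hxZ : (x : ℂ) ∈ cutPlaneZero := Or.inr (by simpa using hx.2)
  have hterm (k : ℕ) : ‖(2 ^ (k + 1) * ((x : ℂ) - (k + 1)) ^ 2)⁻¹ * G ((x : ℂ) - (k + 1))⁻¹‖ ≤
      (2 ^ (k + 1) * ((k : ℝ) + 1) ^ 2)⁻¹ * M := by
    have hy : x - (k + 1) ≤ -1 := by linarith [hx.2, k.cast_nonneg (α := ℝ)]
    have hcast : (x : ℂ) - (k + 1) = ((x - (k + 1) : ℝ) : ℂ) := by push_cast; ring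
    rw [hcast, ← ofReal_inv, norm_mul, norm_inv, norm_mul, norm_pow, norm_pow, norm_real,
      Real.norm_eq_abs, abs_of_neg (by linarith), Complex.norm_two]
    gcongr
    · linarith [hx.2]
    · exact hM _ (inv_mem_Icc_neg_one_zero hy)
  calc ‖G x‖ = ‖(2 ^ n)⁻¹ * G (x - n) -
        ∑ k ∈ range n, (2 ^ (k + 1) * ((x : ℂ) - (k + 1)) ^ 2)⁻¹ * G ((x : ℂ) - (k + 1))⁻¹‖ := by
        rw [← hG.eq_iterate hxZ n]
    _ ≤ ‖(2 ^ n)⁻¹ * G (x - n)‖ + ∑ k ∈ range n,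
        ‖(2 ^ (k + 1) * ((x : ℂ) - (k + 1)) ^ 2)⁻¹ * G ((x : ℂ) - (k + 1))⁻¹‖ :=
      (norm_sub_le _ _).trans (add_le_add_right (norm_sum_le _ _) _)
    _ ≤ (2 ^ n)⁻¹ * ‖G (x - n)‖ + ∑ k ∈ range n, (2 ^ (k + 1) * ((k : ℝ) + 1) ^ 2)⁻¹ * M := by
      rw [norm_mul, norm_inv, norm_pow, Complex.norm_two]
      gcongr with k
      exact hterm k
    _ ≤ (2 ^ n)⁻¹ * ‖G (x - n)‖ + 5 / 8 * M := by
      rw [← sum_mul]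
      gcongr
      exact sum_range_inv_two_pow_mul_sq_le n

end SatisfiesDyadicFE

lemma neg_re_le_infDist_posReal (z : ℂ) : -z.re ≤ infDist z {w : ℂ | w.im = 0 ∧ 0 ≤ w.re} := by
  rw [le_infDist ⟨0, by simp⟩]
  rintro w ⟨-, hw⟩
  calc -z.re ≤ (w - z).re := by simp only [sub_re]; linarith
    _ ≤ ‖w - z‖ := re_le_norm _
    _ = dist z w := by rw [dist_comm, dist_eq_norm]

namespace DecaysAwayFromPosAxis

variable {G G₁ G₂ : ℂ → ℂ}

lemma sub (h₁ : DecaysAwayFromPosAxis G₁) (h₂ : DecaysAwayFromPosAxis G₂) :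
    DecaysAwayFromPosAxis (G₁ - G₂) := by
  intro ε hε
  obtain ⟨R₁, hR₁⟩ := h₁ (ε / 2) (half_pos hε)
  obtain ⟨R₂, hR₂⟩ := h₂ (ε / 2) (half_pos hε)
  refine ⟨max R₁ R₂, fun z hz => ?_⟩
  calc ‖G₁ z - G₂ z‖ ≤ ‖G₁ z‖ + ‖G₂ z‖ := norm_sub_le _ _
    _ ≤ ε / 2 + ε / 2 :=
      add_le_add (hR₁ z ((le_max_left _ _).trans hz)) (hR₂ z ((le_max_right _ _).trans hz))
    _ = ε := add_halves ε

lemma tendsto_sub_natCast (h : DecaysAwayFromPosAxis G) (z : ℂ) :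
    Tendsto (fun n : ℕ => G (z - n)) atTop (𝓝 0) := by
  rw [tendsto_zero_iff_norm_tendsto_zero, tendsto_order]
  refine ⟨fun a ha => Eventually.of_forall fun n => ha.trans_le (norm_nonneg _), fun ε hε => ?_⟩
  obtain ⟨R, hR⟩ := h (ε / 2) (half_pos hε)
  filter_upwards [eventually_ge_atTop ⌈R + z.re⌉₊] with n hn
  refine (hR _ ?_).trans_lt (half_lt_self hε)
  calc R ≤ n - z.re := by linarith [Nat.ceil_le.1 hn]
    _ = -(z - n).re := by simp
    _ ≤ _ := neg_re_le_infDist_posReal _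

end DecaysAwayFromPosAxis

lemma SatisfiesDyadicFE.eqOn_zero_Icc {G : ℂ → ℂ} (hG : SatisfiesDyadicFE G)
    (hcont : ContinuousOn (fun x : ℝ => G x) (Icc (-1) 0)) (hdecay : DecaysAwayFromPosAxis G) :
    ∀ x ∈ Icc (-1 : ℝ) 0, G x = 0 := by
  obtain ⟨x₀, hx₀, hmax⟩ :=
    isCompact_Icc.exists_isMaxOn (nonempty_Icc.2 (by norm_num)) hcont.norm
  have hM : ∀ y ∈ Icc (-1 : ℝ) 0, ‖G y‖ ≤ ‖G x₀‖ := fun y hy => hmax hy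
  have hlim : Tendsto (fun n : ℕ => (2 ^ n)⁻¹ * ‖G (x₀ - n)‖ + 5 / 8 * ‖G x₀‖) atTop
      (𝓝 (5 / 8 * ‖G x₀‖)) := by
    simpa using ((tendsto_inv_atTop_zero.comp (tendsto_pow_atTop_atTop_of_one_lt one_lt_two)).mul
      (hdecay.tendsto_sub_natCast x₀).norm).add_const (5 / 8 * ‖G x₀‖)
  have hle : ‖G x₀‖ ≤ 5 / 8 * ‖G x₀‖ :=
    ge_of_tendsto hlim (Eventually.of_forall (hG.norm_le_of_forall_Icc hM hx₀))
  intro x hx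
  exact norm_le_zero_iff.1 (by linarith [hM x hx, norm_nonneg (G x₀)])

-- `{z | 1 - z ∈ slitPlane}` is `ℂ ∖ [1, ∞)`, the interior of `cutPlaneOne`.
lemma isOpen_one_sub_mem_slitPlane : IsOpen {z : ℂ | 1 - z ∈ slitPlane} :=
  isOpen_slitPlane.preimage (continuous_const.sub continuous_id)

lemma isPreconnected_one_sub_mem_slitPlane : IsPreconnected {z : ℂ | 1 - z ∈ slitPlane} :=
  (Homeomorph.subLeft (1 : ℂ)).isPreconnected_preimage.2
    (starConvex_one_slitPlane.isPathConnected one_mem_slitPlane).isConnected.isPreconnected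

lemma one_sub_mem_slitPlane_subset_cutPlaneOne : {z : ℂ | 1 - z ∈ slitPlane} ⊆ cutPlaneOne := by
  intro z hz
  rcases mem_slitPlane_iff.1 hz with hre | him
  · exact Or.inr (by simp only [sub_re, one_re] at hre; linarith)
  · exact Or.inl (by simpa using him)

lemma cutPlaneOne_subset_closure : cutPlaneOne ⊆ closure {z : ℂ | 1 - z ∈ slitPlane} := by
  rintro z (him | hre)
  · exact subset_closure (mem_slitPlane_iff.2 (Or.inr (by simpa using him)))
  · have hz : z ∈ closure {w : ℂ | w.re < 1} := by rwa [closure_setOfPred_re_lt]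
    refine closure_mono (fun w hw => ?_) hz
    exact mem_slitPlane_iff.2 (Or.inl (by simpa using (hw : w.re < 1)))

lemma eqOn_zero_of_forall_Ioo {G : ℂ → ℂ} (hG : DifferentiableOn ℂ G cutPlaneOne)
    (h0 : ∀ x ∈ Ioo (-1 : ℝ) 0, G x = 0) : EqOn G 0 cutPlaneOne := by
  have hmap : Tendsto ofReal (𝓝[<] 0) (𝓝[≠] 0) := by
    rw [← ofReal_zero]
    exact continuous_ofReal.continuousWithinAt.tendsto_nhdsWithin fun x hx => by
      simpa using (hx : x < 0).ne
  have hfreq : ∃ᶠ z in 𝓝[≠] (0 : ℂ), G z = 0 :=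
    hmap.frequently (eventually_of_mem (Ioo_mem_nhdsLT (by norm_num)) h0).frequently
  have hU : EqOn G 0 {z : ℂ | 1 - z ∈ slitPlane} :=
    ((hG.mono one_sub_mem_slitPlane_subset_cutPlaneOne).analyticOnNhd
      isOpen_one_sub_mem_slitPlane).eqOn_zero_of_preconnected_of_frequently_eq_zero
      isPreconnected_one_sub_mem_slitPlane (by simp [mem_slitPlane_iff]) hfreq
  exact hU.of_subset_closure hG.continuousOn continuousOn_const
    one_sub_mem_slitPlane_subset_cutPlaneOne cutPlaneOne_subset_closure

lemma SatisfiesDyadicFE.eqOn_zero {G : ℂ → ℂ} (hG : SatisfiesDyadicFE G)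
    (hdiff : DifferentiableOn ℂ G cutPlaneOne) (hdecay : DecaysAwayFromPosAxis G) :
    EqOn G 0 cutPlaneOne := by
  have hIcc : MapsTo ofReal (Icc (-1) 0) cutPlaneOne :=
    fun y hy => Or.inr (by simpa using hy.2.trans zero_le_one)
  refine eqOn_zero_of_forall_Ioo hdiff fun x hx => ?_
  exact hG.eqOn_zero_Icc (hdiff.continuousOn.comp continuous_ofReal.continuousOn hIcc) hdecay x
    (Ioo_subset_Icc_self hx)

lemma satisfiesDyadicFE_sub {f G₁ G₂ : ℂ → ℂ}
    (h₁ : ∀ z ∈ cutPlaneZero, z ≠ 0 → f z + (z ^ 2)⁻¹ * G₁ z⁻¹ + 2 * G₁ (z + 1) = G₁ z)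
    (h₂ : ∀ z ∈ cutPlaneZero, z ≠ 0 → f z + (z ^ 2)⁻¹ * G₂ z⁻¹ + 2 * G₂ (z + 1) = G₂ z) :
    SatisfiesDyadicFE (G₁ - G₂) := fun z hz hz0 => by
  simp only [Pi.sub_apply]
  linear_combination h₁ z hz hz0 - h₂ z hz hz0

/-- A function holomorphic on `ℂ ∖ (1,∞)`, decaying away from `ℝ₊`, and
satisfying the homogeneous three-term functional equation
`(1/z²)·G₀(1/z) + 2·G₀(z+1) = G₀(z)` vanishes identically; consequently a
holomorphic solution of the inhomogeneous equation
`1/z + (1/z²)·G(1/z) + 2·G(z+1) = G(z)` with this decay is unique. -/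
theorem dyadic_period_function_unique :
    (∀ G₀ : ℂ → ℂ, DifferentiableOn ℂ G₀ cutPlaneOne →
      (∀ z : ℂ, z ∈ cutPlaneZero → z ≠ 0 →
        (z ^ 2)⁻¹ * G₀ z⁻¹ + 2 * G₀ (z + 1) = G₀ z) →
      DecaysAwayFromPosAxis G₀ →
      ∀ z ∈ cutPlaneOne, G₀ z = 0) ∧
    (∀ G₁ G₂ : ℂ → ℂ, DifferentiableOn ℂ G₁ cutPlaneOne →
      DifferentiableOn ℂ G₂ cutPlaneOne →
      (∀ z : ℂ, z ∈ cutPlaneZero → z ≠ 0 →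
        z⁻¹ + (z ^ 2)⁻¹ * G₁ z⁻¹ + 2 * G₁ (z + 1) = G₁ z) →
      (∀ z : ℂ, z ∈ cutPlaneZero → z ≠ 0 →
        z⁻¹ + (z ^ 2)⁻¹ * G₂ z⁻¹ + 2 * G₂ (z + 1) = G₂ z) →
      DecaysAwayFromPosAxis G₁ → DecaysAwayFromPosAxis G₂ →
      ∀ z ∈ cutPlaneOne, G₁ z = G₂ z) := by
  refine ⟨fun G₀ hdiff hfe hdecay z hz =>
    SatisfiesDyadicFE.eqOn_zero hfe hdiff hdecay hz, ?_⟩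
  intro G₁ G₂ hdiff₁ hdiff₂ hfe₁ hfe₂ hdecay₁ hdecay₂ z hz
  exact sub_eq_zero.1 <| (satisfiesDyadicFE_sub hfe₁ hfe₂).eqOn_zero (hdiff₁.sub hdiff₂)
    (hdecay₁.sub hdecay₂) hz
end
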